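/- Let Σ be a symmetric positive semidefinite real N×N matrix and b, m ∈ ℝ^N with bᵀΣm ≥ mᵀΣm. Then for every target risk level σ_g with mᵀΣm ≤ σ_g ≤ bᵀΣb, there exists γ ∈ [0,1] such that σᵃ(γ) = σ_g; moreover, if mᵀΣm < bᵀΣb, this γ is unique. -/

import Mathlib

/-!
Along the segment the risk is the quadratic
`γ ↦ bᵀΣb + 2γ·bᵀΣ(m - b) + γ²·(m - b)ᵀΣ(m - b)`, whose leading coefficient is `≥ 0`.
Existence is the intermediate value theorem between `γ = 1` and `γ = 0`. The optimality
condition says exactly that the slope at `γ = 1` is `≤ 0`; together with the strict drop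
from `γ = 0` to `γ = 1` this makes the quadratic strictly decreasing on `[0, 1]`, hence injective.
-/

open Matrix Set

lemma strictAntiOn_Icc_quadratic {a l c : ℝ} (hc : 0 ≤ c) (hl : l + c ≤ 0) (hlc : 2 * l + c < 0) :
    StrictAntiOn (fun γ : ℝ => a + 2 * γ * l + γ ^ 2 * c) (Icc 0 1) := by
  intro x ⟨hx₀, hx₁⟩ y ⟨hy₀, hy₁⟩ hxy
  have hslope : 2 * l + (x + y) * c < 0 := by
    rcases le_or_gt (x + y) 1 with hs | hs
    · nlinarith
    · -- write `x + y ∈ (1, 2)` as a convex combination of `1` and `2`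
      have : 2 * l + (x + y) * c = (2 - (x + y)) * (2 * l + c) + (x + y - 1) * (2 * (l + c)) := by
        ring
      nlinarith
  have : (a + 2 * y * l + y ^ 2 * c) - (a + 2 * x * l + x ^ 2 * c)
      = (y - x) * (2 * l + (x + y) * c) := by ring
  dsimp only
  nlinarith

namespace Matrix

variable {n : Type*} [Fintype n]

theorem IsSymm.dotProduct_mulVec_comm {R : Type*} [CommSemiring R] {S : Matrix n n R}
    (hS : S.IsSymm) (x y : n → R) : x ⬝ᵥ (S *ᵥ y) = y ⬝ᵥ (S *ᵥ x) := by
  conv_lhs => rw [← hS.eq, dotProduct_mulVec, vecMul_transpose]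
  exact dotProduct_comm _ _

theorem IsSymm.dotProduct_mulVec_lineMap {R : Type*} [CommRing R] {S : Matrix n n R}
    (hS : S.IsSymm) (b m : n → R) (γ : R) :
    ((1 - γ) • b + γ • m) ⬝ᵥ (S *ᵥ ((1 - γ) • b + γ • m))
      = b ⬝ᵥ (S *ᵥ b) + 2 * γ * (b ⬝ᵥ (S *ᵥ (m - b))) + γ ^ 2 * ((m - b) ⬝ᵥ (S *ᵥ (m - b))) := by
  rw [show (1 - γ) • b + γ • m = b + γ • (m - b) by module]
  simp only [mulVec_add, mulVec_smul, add_dotProduct, smul_dotProduct, dotProduct_add,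
    dotProduct_smul, smul_eq_mul, hS.dotProduct_mulVec_comm (m - b) b]
  ring

theorem PosSemidef.strictAntiOn_dotProduct_mulVec_lineMap {S : Matrix n n ℝ} (hS : S.PosSemidef)
    {b m : n → ℝ} (h : m ⬝ᵥ (S *ᵥ m) ≤ b ⬝ᵥ (S *ᵥ m)) (hlt : m ⬝ᵥ (S *ᵥ m) < b ⬝ᵥ (S *ᵥ b)) :
    StrictAntiOn (fun γ : ℝ => ((1 - γ) • b + γ • m) ⬝ᵥ (S *ᵥ ((1 - γ) • b + γ • m))) (Icc 0 1) := by
  have hS' : S.IsSymm := isHermitian_iff_isSymm.mp hS.isHermitian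
  simp only [hS'.dotProduct_mulVec_lineMap]
  have h_at_one := hS'.dotProduct_mulVec_lineMap b m 1
  have hmb : m ⬝ᵥ (S *ᵥ m) - b ⬝ᵥ (S *ᵥ m)
      = b ⬝ᵥ (S *ᵥ (m - b)) + (m - b) ⬝ᵥ (S *ᵥ (m - b)) := by
    rw [← add_dotProduct, add_sub_cancel, mulVec_sub, dotProduct_sub,
      hS'.dotProduct_mulVec_comm m b]
  simp only [sub_self, zero_smul, one_smul, zero_add] at h_at_one
  refine strictAntiOn_Icc_quadratic ?_ (by linarith) (by linarith)
  simpa only [star_trivial] using hS.dotProduct_mulVec_nonneg (m - b)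

end Matrix

theorem risk_control_exists_unique_general
    (N : ℕ) (S : Matrix (Fin N) (Fin N) ℝ) (hS : S.PosSemidef)
    (b m : Fin N → ℝ) (h : m ⬝ᵥ (S *ᵥ m) ≤ b ⬝ᵥ (S *ᵥ m))
    (σg : ℝ) (h₁ : m ⬝ᵥ (S *ᵥ m) ≤ σg) (h₂ : σg ≤ b ⬝ᵥ (S *ᵥ b)) :
    (∃ γ ∈ Set.Icc (0 : ℝ) 1,
        ((1 - γ) • b + γ • m) ⬝ᵥ (S *ᵥ ((1 - γ) • b + γ • m)) = σg) ∧
      (m ⬝ᵥ (S *ᵥ m) < b ⬝ᵥ (S *ᵥ b) →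
        ∀ γ₁ ∈ Set.Icc (0 : ℝ) 1, ∀ γ₂ ∈ Set.Icc (0 : ℝ) 1,
          ((1 - γ₁) • b + γ₁ • m) ⬝ᵥ (S *ᵥ ((1 - γ₁) • b + γ₁ • m)) = σg →
          ((1 - γ₂) • b + γ₂ • m) ⬝ᵥ (S *ᵥ ((1 - γ₂) • b + γ₂ • m)) = σg →
          γ₁ = γ₂) := by
  have hcont : Continuous fun γ : ℝ => ((1 - γ) • b + γ • m) ⬝ᵥ (S *ᵥ ((1 - γ) • b + γ • m)) := by
    fun_prop
  refine ⟨?_, fun hlt γ₁ hγ₁ γ₂ hγ₂ e₁ e₂ =>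
    (hS.strictAntiOn_dotProduct_mulVec_lineMap h hlt).injOn hγ₁ hγ₂ (e₁.trans e₂.symm)⟩
  have hσ : σg ∈ Icc (m ⬝ᵥ (S *ᵥ m)) (b ⬝ᵥ (S *ᵥ b)) := ⟨h₁, h₂⟩
  simpa using intermediate_value_Icc' zero_le_one hcont.continuousOn (by simpa using hσ)

/-- fine-grained risk control. Under the first-order optimality
condition `bᵀΣm ≥ mᵀΣm`, every target risk `σ_g ∈ [mᵀΣm, bᵀΣb]` is attained by
some interpolation weight `γ ∈ [0,1]`; if moreover `mᵀΣm < bᵀΣb`, this `γ` is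
unique. -/
theorem risk_control_exists_unique
    (N : ℕ) (hN : 1 ≤ N) (S : Matrix (Fin N) (Fin N) ℝ) (hS : S.PosSemidef)
    (b m : Fin N → ℝ) (h : m ⬝ᵥ (S *ᵥ m) ≤ b ⬝ᵥ (S *ᵥ m))
    (σg : ℝ) (h₁ : m ⬝ᵥ (S *ᵥ m) ≤ σg) (h₂ : σg ≤ b ⬝ᵥ (S *ᵥ b)) :
    (∃ γ ∈ Set.Icc (0 : ℝ) 1,
        ((1 - γ) • b + γ • m) ⬝ᵥ (S *ᵥ ((1 - γ) • b + γ • m)) = σg) ∧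
      (m ⬝ᵥ (S *ᵥ m) < b ⬝ᵥ (S *ᵥ b) →
        ∀ γ₁ ∈ Set.Icc (0 : ℝ) 1, ∀ γ₂ ∈ Set.Icc (0 : ℝ) 1,
          ((1 - γ₁) • b + γ₁ • m) ⬝ᵥ (S *ᵥ ((1 - γ₁) • b + γ₁ • m)) = σg →
          ((1 - γ₂) • b + γ₂ • m) ⬝ᵥ (S *ᵥ ((1 - γ₂) • b + γ₂ • m)) = σg →
          γ₁ = γ₂) :=
  risk_control_exists_unique_general N S hS b m h σg h₁ h₂
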